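/- Let a be an integer, α a real number with 0 < α < 1, and y : ℤ → ℝ. For each ω > 0 let z(ω, ·) : ℤ → ℝ satisfy z(ω, a) = 0 and z(ω, k) − z(ω, k−1) = −ω z(ω, k) + (y(k) − y(k−1)) for every integer k ≥ a+1. Then for every integer k ≥ a+1, the function ω ↦ μ_{1−α}(ω) z(ω, k) is integrable on (0, +∞) and the Caputo fractional difference satisfies {}_a∇_k^{α} y(k) = ∫_0^{+∞} μ_{1−α}(ω) z(ω, k) dω. -/

import Mathlib

/-!
Solving the recursion gives `z(ω, a+n) = ∑_{i<n} (1+ω)^{-(i+1)} ∇y(a+n-i)`, so the integral splits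
into the finitely many integrals `∫_0^∞ ω^{α-1} (1+ω)^{-(i+1)} dω`. The substitution `ω = t/(1-t)`
turns each of them into the Beta integral `B(α, i+1-α) = Γ(α) Γ(i+1-α) / Γ(i+1)`, and the
reflection formula `Γ(α) Γ(1-α) = π / sin(πα)` cancels the constant of the weight `μ_{1-α}`, leaving
exactly the coefficient `Γ(1-α+i) / (Γ(1-α) Γ(i+1))` of the fractional sum.
-/

/-- The `α`-th nabla fractional sum of `u : ℤ → ℝ` with initial instant `a`:
`{}_a∇_k^{-α} u(k) = ∑_{i=0}^{k-a-1} (Γ(α+i)/(Γ(α) Γ(i+1))) u(k−i)`. -/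
noncomputable def nablaFracSum (a : ℤ) (α : ℝ) (u : ℤ → ℝ) (k : ℤ) : ℝ :=
  ∑ i ∈ Finset.range (k - a).toNat,
    Real.Gamma (α + i) / (Real.Gamma α * Real.Gamma (i + 1)) * u (k - i)

/-- The nabla Caputo fractional difference of order `0 < α < 1`:
`{}_a∇_k^{α} y(k) = {}_a∇_k^{-(1−α)} (∇y)(k)`, where `∇y(k) = y(k) − y(k−1)`. -/
noncomputable def nablaCaputoDiff (a : ℤ) (α : ℝ) (y : ℤ → ℝ) (k : ℤ) : ℝ :=
  nablaFracSum a (1 - α) (fun j => y j - y (j - 1)) k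

open MeasureTheory Set Real

section BetaIntegral

variable {p q : ℝ}

lemma ofReal_cpow_mul_one_sub_cpow {t : ℝ} (ht : t ∈ Ioo (0 : ℝ) 1) :
    (t : ℂ) ^ ((p : ℂ) - 1) * (1 - (t : ℂ)) ^ ((q : ℂ) - 1)
      = ((t ^ (p - 1) * (1 - t) ^ (q - 1) : ℝ) : ℂ) := by
  have h1t : (0 : ℝ) ≤ 1 - t := by linarith [ht.2]
  push_cast [Complex.ofReal_cpow ht.1.le, Complex.ofReal_cpow h1t]
  rfl

lemma integrableOn_rpow_mul_one_sub_rpow (hp : 0 < p) (hq : 0 < q) :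
    IntegrableOn (fun t : ℝ => t ^ (p - 1) * (1 - t) ^ (q - 1)) (Ioo 0 1) := by
  have hconv := (Complex.betaIntegral_convergent (u := p) (v := q) (by simpa) (by simpa)).1
  have h := ((hconv.mono_set Ioo_subset_Ioc_self).congr_fun
    (fun t ht => ofReal_cpow_mul_one_sub_cpow ht) measurableSet_Ioo).re
  simp only [RCLike.re_to_complex, Complex.ofReal_re] at h
  exact h

lemma integral_rpow_mul_one_sub_rpow (hp : 0 < p) (hq : 0 < q) :
    ∫ t in Ioo (0 : ℝ) 1, t ^ (p - 1) * (1 - t) ^ (q - 1)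
      = Gamma p * Gamma q / Gamma (p + q) := by
  have hβ : Complex.betaIntegral p q
      = ((∫ t in Ioo (0 : ℝ) 1, t ^ (p - 1) * (1 - t) ^ (q - 1) : ℝ) : ℂ) := by
    rw [Complex.betaIntegral, intervalIntegral.integral_of_le zero_le_one,
      integral_Ioc_eq_integral_Ioo,
      setIntegral_congr_fun measurableSet_Ioo fun t ht => ofReal_cpow_mul_one_sub_cpow ht]
    exact integral_ofReal
  rw [← ProbabilityTheory.beta, ProbabilityTheory.beta_eq_betaIntegralReal p q hp hq, hβ,
    Complex.ofReal_re]

end BetaIntegral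

section DivOneSub

lemma hasDerivAt_div_one_sub {t : ℝ} (ht : t ≠ 1) :
    HasDerivAt (fun t : ℝ => t / (1 - t)) ((1 - t) ^ 2)⁻¹ t := by
  have h := (hasDerivAt_id' t).div ((hasDerivAt_id' t).const_sub 1) (sub_ne_zero.2 ht.symm)
  exact h.congr_deriv (by ring)

lemma injOn_div_one_sub : InjOn (fun t : ℝ => t / (1 - t)) (Ioo 0 1) := by
  intro s hs t ht hst
  have hs1 : 1 - s ≠ 0 := by linarith [hs.2]
  have ht1 : 1 - t ≠ 0 := by linarith [ht.2]
  field_simp at hst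
  linarith

lemma image_div_one_sub_Ioo : (fun t : ℝ => t / (1 - t)) '' Ioo 0 1 = Ioi 0 := by
  refine Subset.antisymm ?_ fun ω (hω : 0 < ω) => ⟨ω / (1 + ω), ?_, ?_⟩
  · rintro _ ⟨t, ht, rfl⟩
    exact div_pos ht.1 (by linarith [ht.2])
  · exact ⟨by positivity, (div_lt_one (by positivity)).2 (by linarith)⟩
  · have : 1 + ω ≠ 0 := by positivity
    field_simp
    ring

lemma integrableOn_Ioi_iff_integrableOn_Ioo_comp_div_one_sub (g : ℝ → ℝ) :
    IntegrableOn g (Ioi 0) ↔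
      IntegrableOn (fun t : ℝ => ((1 - t) ^ 2)⁻¹ * g (t / (1 - t))) (Ioo 0 1) := by
  rw [← image_div_one_sub_Ioo, integrableOn_image_iff_integrableOn_abs_deriv_smul
    measurableSet_Ioo (fun t ht => (hasDerivAt_div_one_sub ht.2.ne).hasDerivWithinAt)
    injOn_div_one_sub]
  simp only [abs_inv, abs_pow, sq_abs, smul_eq_mul]

lemma integral_Ioi_eq_integral_Ioo_comp_div_one_sub (g : ℝ → ℝ) :
    ∫ ω in Ioi 0, g ω = ∫ t in Ioo (0 : ℝ) 1, ((1 - t) ^ 2)⁻¹ * g (t / (1 - t)) := by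
  rw [← image_div_one_sub_Ioo, integral_image_eq_integral_abs_deriv_smul
    measurableSet_Ioo (fun t ht => (hasDerivAt_div_one_sub ht.2.ne).hasDerivWithinAt)
    injOn_div_one_sub]
  simp only [abs_inv, abs_pow, sq_abs, smul_eq_mul]

end DivOneSub

section OneAddRpow

variable {p q : ℝ}

lemma inv_one_sub_sq_mul_div_one_sub_rpow {t : ℝ} (ht : t ∈ Ioo (0 : ℝ) 1) :
    ((1 - t) ^ 2)⁻¹ * ((t / (1 - t)) ^ (p - 1) * (1 + t / (1 - t)) ^ (-(p + q)))
      = t ^ (p - 1) * (1 - t) ^ (q - 1) := by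
  have h1t : 0 < 1 - t := by linarith [ht.2]
  have hsum : 1 + t / (1 - t) = (1 - t)⁻¹ := by field_simp; ring
  have hsplit : (1 - t) ^ (p + q) = (1 - t) ^ (q - 1) * (1 - t) ^ (p - 1) * (1 - t) ^ 2 := by
    rw [← rpow_natCast, ← rpow_add h1t, ← rpow_add h1t]
    ring_nf
  rw [hsum, inv_rpow h1t.le, rpow_neg h1t.le, inv_inv, div_rpow ht.1.le h1t.le, hsplit]
  have : (1 - t) ^ (p - 1) ≠ 0 := by positivity
  field_simp

lemma integrableOn_rpow_mul_one_add_rpow (hp : 0 < p) (hq : 0 < q) :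
    IntegrableOn (fun ω : ℝ => ω ^ (p - 1) * (1 + ω) ^ (-(p + q))) (Ioi 0) := by
  rw [integrableOn_Ioi_iff_integrableOn_Ioo_comp_div_one_sub]
  exact (integrableOn_rpow_mul_one_sub_rpow hp hq).congr_fun
    (fun t ht => (inv_one_sub_sq_mul_div_one_sub_rpow ht).symm) measurableSet_Ioo

lemma integral_rpow_mul_one_add_rpow (hp : 0 < p) (hq : 0 < q) :
    ∫ ω in Ioi (0 : ℝ), ω ^ (p - 1) * (1 + ω) ^ (-(p + q))
      = Gamma p * Gamma q / Gamma (p + q) := by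
  rw [integral_Ioi_eq_integral_Ioo_comp_div_one_sub, ← integral_rpow_mul_one_sub_rpow hp hq]
  exact setIntegral_congr_fun measurableSet_Ioo fun t ht => inv_one_sub_sq_mul_div_one_sub_rpow ht

end OneAddRpow

lemma eq_sum_of_sub_eq_neg_mul_add {a : ℤ} {ω : ℝ} (hω : 1 + ω ≠ 0) {z u : ℤ → ℝ}
    (h0 : z a = 0) (h : ∀ k, a + 1 ≤ k → z k - z (k - 1) = -ω * z k + u k) (m : ℕ) :
    z (a + m) = ∑ i ∈ Finset.range m, ((1 + ω) ^ (i + 1))⁻¹ * u (a + m - i) := by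
  induction m with
  | zero => simpa using h0
  | succ m ih =>
    have hstep : z (a + (m + 1 : ℕ)) = (1 + ω)⁻¹ * (z (a + m) + u (a + (m + 1 : ℕ))) := by
      have hrec := h (a + (m + 1 : ℕ)) (by push_cast; omega)
      rw [show a + ((m + 1 : ℕ) : ℤ) - 1 = a + m by push_cast; ring] at hrec
      field_simp
      linarith
    rw [hstep, ih, Finset.sum_range_succ', mul_add, Finset.mul_sum]
    congr 1
    · refine Finset.sum_congr rfl fun i _ => ?_
      rw [show a + ((m + 1 : ℕ) : ℤ) - ((i + 1 : ℕ) : ℤ) = a + m - i by push_cast; ring,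
        pow_succ _ (i + 1), mul_inv]
      ring
    · simp

lemma sin_one_sub_mul_pi_div_pi_mul_Gamma {α : ℝ} (hα : sin (π * α) ≠ 0) :
    sin ((1 - α) * π) / π * Gamma α = (Gamma (1 - α))⁻¹ := by
  have hrefl := Gamma_mul_Gamma_one_sub α
  rw [show (1 - α) * π = π - π * α by ring, sin_pi_sub]
  refine eq_inv_of_mul_eq_one_left ?_
  rw [mul_assoc, hrefl]
  field_simp

/-- **Frequency distributed model of the Caputo fractional difference.**
If for each `ω > 0`, `z(ω,·)` satisfies `z(ω,a) = 0` and
`z(ω,k) − z(ω,k−1) = −ω z(ω,k) + ∇y(k)` for `k ≥ a+1`, then for every `k ≥ a+1` the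
function `ω ↦ μ_{1−α}(ω) z(ω,k)` is integrable on `(0,∞)` and
`{}_a∇_k^{α} y(k) = ∫_0^∞ μ_{1−α}(ω) z(ω,k) dω`, where `μ_β(ω) = sin(βπ)/(π ω^β)`. -/
theorem caputo_frequency_distributed_model
    (a : ℤ) (α : ℝ) (hα0 : 0 < α) (hα1 : α < 1) (y : ℤ → ℝ)
    (z : ℝ → ℤ → ℝ)
    (hz0 : ∀ ω : ℝ, 0 < ω → z ω a = 0)
    (hz : ∀ ω : ℝ, 0 < ω → ∀ k : ℤ, a + 1 ≤ k →
      z ω k - z ω (k - 1) = -ω * z ω k + (y k - y (k - 1))) :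
    ∀ k : ℤ, a + 1 ≤ k →
      MeasureTheory.IntegrableOn
        (fun ω : ℝ => Real.sin ((1 - α) * Real.pi) / (Real.pi * ω ^ (1 - α)) * z ω k)
        (Set.Ioi (0 : ℝ)) ∧
      nablaCaputoDiff a α y k =
        ∫ ω in Set.Ioi (0 : ℝ),
          Real.sin ((1 - α) * Real.pi) / (Real.pi * ω ^ (1 - α)) * z ω k := by
  intro k hk
  obtain ⟨n, rfl⟩ : ∃ n : ℕ, k = a + n := ⟨(k - a).toNat, by omega⟩
  set c : ℕ → ℝ := fun i => sin ((1 - α) * π) / π * (y (a + n - i) - y (a + n - i - 1))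
  set g : ℕ → ℝ → ℝ := fun i ω => ω ^ (α - 1) * (1 + ω) ^ (-(α + (i + 1 - α)))
  have hq : ∀ i : ℕ, 0 < (i : ℝ) + 1 - α := fun i => by linarith [(i.cast_nonneg : (0 : ℝ) ≤ i)]
  have hg : ∀ i ∈ Finset.range n, IntegrableOn (fun ω => c i * g i ω) (Ioi 0) :=
    fun i _ => (integrableOn_rpow_mul_one_add_rpow hα0 (hq i)).const_mul (c i)
  have hz_sum : EqOn (fun ω => sin ((1 - α) * π) / (π * ω ^ (1 - α)) * z ω (a + n))
      (fun ω => ∑ i ∈ Finset.range n, c i * g i ω) (Ioi 0) := by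
    intro ω (hω : 0 < ω)
    dsimp only
    rw [eq_sum_of_sub_eq_neg_mul_add (by positivity) (hz0 ω hω) (hz ω hω) n, Finset.mul_sum]
    refine Finset.sum_congr rfl fun i _ => ?_
    simp only [c, g]
    rw [show α + (i + 1 - α) = ((i + 1 : ℕ) : ℝ) by push_cast; ring, rpow_neg (by positivity),
      rpow_natCast, show α - 1 = -(1 - α) by ring, rpow_neg hω.le]
    ring
  refine ⟨IntegrableOn.congr_fun (integrable_finsetSum _ hg) hz_sum.symm measurableSet_Ioi, ?_⟩
  rw [setIntegral_congr_fun measurableSet_Ioi hz_sum, integral_finsetSum _ hg]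
  simp only [nablaCaputoDiff, nablaFracSum, add_sub_cancel_left, Int.toNat_natCast]
  have hsin : sin (π * α) ≠ 0 :=
    (sin_pos_of_pos_of_lt_pi (by positivity) (by nlinarith [pi_pos])).ne'
  refine Finset.sum_congr rfl fun i _ => ?_
  rw [integral_const_mul, integral_rpow_mul_one_add_rpow hα0 (hq i)]
  simp only [c]
  rw [show α + (i + 1 - α) = i + 1 by ring, show (i : ℝ) + 1 - α = 1 - α + i by ring,
    mul_right_comm, mul_div_assoc', ← mul_assoc, sin_one_sub_mul_pi_div_pi_mul_Gamma hsin]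
  field_simp
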